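/- Let n, k be positive integers, a₁,…,a_k ∈ ℤ, and b ∈ {0,…,n-1}. The number of binary solutions of a₁x₁ + ⋯ + a_k x_k ≡ b (mod n) in {0,1}^k is at most (2^k/n) ∑_{m=1}^{n} ∏_{j=1}^{k} |cos(π a_j m / n)|. -/

import Mathlib

open Finset Complex

noncomputable def eC (n : ℕ) (t : ℤ) : ℂ :=
  Complex.exp (2 * Real.pi * Complex.I * t / n)

lemma eC_add (n : ℕ) (s t : ℤ) : eC n (s + t) = eC n s * eC n t := by
  rw [eC, eC, eC, ← Complex.exp_add]
  congr 1
  push_cast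
  ring

lemma eC_pow (n : ℕ) (t : ℤ) (m : ℕ) : eC n ((m : ℤ) * t) = (eC n t) ^ m := by
  rw [eC, eC, ← Complex.exp_nat_mul]
  congr 1
  push_cast
  ring

lemma sum_eC (n : ℕ) (hn : 1 ≤ n) (t : ℤ) :
    ∑ m ∈ Finset.range n, eC n ((m : ℤ) * t) = if (n:ℤ) ∣ t then (n:ℂ) else 0 := by
  have hn0 : (n : ℂ) ≠ 0 := Nat.cast_ne_zero.mpr (by omega)
  simp only [eC_pow]
  by_cases h : (n:ℤ) ∣ t
  · obtain ⟨s, rfl⟩ := h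
    have h1 : eC n ((n:ℤ) * s) = 1 := by
      rw [eC]
      have : 2 * (Real.pi : ℂ) * Complex.I * ((n:ℤ) * s : ℤ) / n
          = (s : ℂ) * (2 * Real.pi * Complex.I) := by
        field_simp
        push_cast
        ring
      rw [this, Complex.exp_int_mul_two_pi_mul_I]
    simp [h1, if_pos (Dvd.intro s rfl)]
  · rw [if_neg h]
    have hz1 : eC n t ≠ 1 := by
      intro hz
      rw [eC, Complex.exp_eq_one_iff] at hz
      obtain ⟨m, hm⟩ := hz
      apply h
      refine ⟨m, ?_⟩
      have hπ : (2 * (Real.pi:ℂ) * Complex.I) ≠ 0 := by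
        simp [Real.pi_ne_zero, Complex.I_ne_zero]
      have hm' : (2*(Real.pi:ℂ)*Complex.I) * t = (2*(Real.pi:ℂ)*Complex.I) * ((m:ℂ)*n) := by
        field_simp at hm
        linear_combination (2*(Real.pi:ℂ)*Complex.I) * hm
      have : (t : ℂ) = (m:ℂ) * n := mul_left_cancel₀ hπ hm'
      have : (t:ℤ) = m * n := by exact_mod_cast this
      linarith [mul_comm m (n:ℤ)]
    have hzn : (eC n t) ^ n = 1 := by
      rw [← eC_pow, eC]
      have : 2 * (Real.pi : ℂ) * Complex.I * ((n:ℤ) * t : ℤ) / n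
          = (t : ℂ) * (2 * Real.pi * Complex.I) := by
        field_simp
        push_cast
        ring
      rw [this, Complex.exp_int_mul_two_pi_mul_I]
    rw [geom_sum_eq hz1, hzn, sub_self, zero_div]

lemma eC_zero (n : ℕ) : eC n 0 = 1 := by simp [eC]

lemma eC_sum {ι : Type*} (n : ℕ) (s : Finset ι) (t : ι → ℤ) :
    eC n (∑ j ∈ s, t j) = ∏ j ∈ s, eC n (t j) := by
  induction s using Finset.cons_induction with
  | empty => simp [eC_zero]
  | cons i s hi ih => rw [Finset.sum_cons, Finset.prod_cons, eC_add, ih]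

lemma eC_eq (n : ℕ) (t : ℤ) :
    eC n t = Complex.exp (((2 * Real.pi * t / n : ℝ) : ℂ) * Complex.I) := by
  rw [eC]; congr 1; push_cast; ring

lemma eC_abs (n : ℕ) (t : ℤ) : ‖eC n t‖ = 1 := by
  rw [eC_eq, Complex.norm_exp_ofReal_mul_I]

lemma norm_one_add_exp (θ : ℝ) :
    ‖1 + Complex.exp ((θ : ℂ) * Complex.I)‖ = 2 * |Real.cos (θ / 2)| := by
  have key : (1 : ℂ) + Complex.exp ((θ : ℂ) * Complex.I)
      = Complex.exp (((θ / 2 : ℝ) : ℂ) * Complex.I) * (2 * Complex.cos ((θ / 2 : ℝ) : ℂ)) := by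
    rw [Complex.two_cos, mul_add, ← Complex.exp_add, ← Complex.exp_add]
    push_cast
    ring_nf
    rw [Complex.exp_zero]
    ring
  rw [key, norm_mul, Complex.norm_exp_ofReal_mul_I, one_mul, ← Complex.ofReal_cos]
  have : (2 : ℂ) * ((Real.cos (θ / 2) : ℝ) : ℂ) = ((2 * Real.cos (θ / 2) : ℝ) : ℂ) := by
    push_cast; ring
  rw [this, Complex.norm_real, Real.norm_eq_abs, abs_mul]
  norm_num

theorem stmt_6 (n k : ℕ) (hn : 1 ≤ n) (hk : 1 ≤ k) (a : Fin k → ℤ) (b : ℕ) (hb : b < n) :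
    ((Finset.univ.filter fun c : Fin k → Fin 2 =>
        (n : ℤ) ∣ (∑ j, a j * ((c j : ℕ) : ℤ)) - b).card : ℝ) ≤
      (2 ^ k / n) * ∑ m ∈ Finset.Icc 1 n,
        ∏ j : Fin k, |Real.cos (Real.pi * a j * m / n)| := by
  classical
  set f : (Fin k → Fin 2) → ℤ := fun c => (∑ j, a j * ((c j : ℕ) : ℤ)) - b with hf
  set A := Finset.univ.filter fun c : Fin k → Fin 2 =>
      (n : ℤ) ∣ (∑ j, a j * ((c j : ℕ) : ℤ)) - b with hA
  have hnR : (0 : ℝ) < n := by exact_mod_cast hn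
  -- Step 1
  have step1 : ∑ c : Fin k → Fin 2, ∑ m ∈ Finset.range n, eC n ((m : ℤ) * f c)
      = (A.card : ℂ) * n := by
    have h1 : ∀ c : Fin k → Fin 2, ∑ m ∈ Finset.range n, eC n ((m : ℤ) * f c)
        = if (n : ℤ) ∣ f c then (n : ℂ) else 0 := fun c => sum_eC n hn (f c)
    simp_rw [h1]
    rw [Finset.sum_ite, Finset.sum_const, Finset.sum_const_zero, add_zero, nsmul_eq_mul]
  -- Step 2: inner sum factorization for fixed m
  have step2 : ∀ m : ℕ, ∑ c : Fin k → Fin 2, eC n ((m : ℤ) * f c)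
      = eC n (-((m : ℤ) * b)) * ∏ j : Fin k, (1 + eC n ((m : ℤ) * a j)) := by
    intro m
    have hsplit : ∀ c : Fin k → Fin 2,
        eC n ((m : ℤ) * f c) = eC n (-((m : ℤ) * b)) * ∏ j, eC n ((m : ℤ) * a j * (c j : ℕ)) := by
      intro c
      rw [← eC_sum]
      rw [← eC_add]
      congr 1
      simp only [hf]
      have h2 : ∑ j : Fin k, (m:ℤ) * (a j * ((c j : ℕ) : ℤ)) = ∑ j : Fin k, (m:ℤ) * a j * ((c j : ℕ) : ℤ) :=
        Finset.sum_congr rfl fun j _ => by ring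
      rw [mul_sub, Finset.mul_sum, h2]
      ring
    simp_rw [hsplit]
    rw [← Finset.mul_sum]
    congr 1
    have := Finset.prod_univ_sum (fun _ : Fin k => (Finset.univ : Finset (Fin 2)))
      (fun j x => eC n ((m : ℤ) * a j * ((x : ℕ) : ℤ)))
    rw [Fintype.piFinset_univ] at this
    rw [← this]
    refine Finset.prod_congr rfl fun j _ => ?_
    rw [Fin.sum_univ_two]
    simp [eC_zero]
  set T : ℕ → ℝ := fun m => ∏ j : Fin k, |Real.cos (Real.pi * a j * m / n)| with hT
  have abs1 : ∀ (t : ℤ), ‖1 + eC n t‖ = 2 * |Real.cos (Real.pi * t / n)| := by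
    intro t
    rw [eC_eq, norm_one_add_exp]
    congr 2
    ring
  -- Step 3
  have step3 : (A.card : ℝ) * n ≤ ∑ m ∈ Finset.range n, 2 ^ k * T m := by
    have h0 : ((A.card : ℝ) * n) = ‖(A.card : ℂ) * n‖ := by
      rw [norm_mul, Complex.norm_natCast, Complex.norm_natCast]
    rw [h0, ← step1, Finset.sum_comm]
    refine le_trans (norm_sum_le _ _) (Finset.sum_le_sum fun m _ => ?_)
    rw [step2 m, norm_mul, eC_abs, one_mul, norm_prod]
    have : ∀ j : Fin k, ‖1 + eC n ((m : ℤ) * a j)‖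
        = 2 * |Real.cos (Real.pi * a j * m / n)| := by
      intro j
      rw [abs1]
      congr 2
      push_cast
      ring
    rw [Finset.prod_congr rfl fun j _ => this j, Finset.prod_mul_distrib,
      Finset.prod_const, Finset.card_univ, Fintype.card_fin]
  -- Step 4: sums over range n and Icc 1 n agree
  have hT0 : T 0 = 1 := by simp [hT]
  have hTn : T n = 1 := by
    rw [hT]
    have harg : ∀ j : Fin k, Real.pi * a j * n / n = (a j : ℝ) * Real.pi := by
      intro j
      field_simp
    simp only
    rw [Finset.prod_congr rfl fun j _ => by rw [harg j]]
    simp [Real.abs_cos_int_mul_pi]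
  have hrange : Finset.range n = insert 0 (Finset.Ico 1 n) := by
    ext x; simp; omega
  have hIcc : Finset.Icc 1 n = insert n (Finset.Ico 1 n) := by
    ext x; simp; omega
  have hsum : ∑ m ∈ Finset.range n, T m = ∑ m ∈ Finset.Icc 1 n, T m := by
    rw [hrange, hIcc, Finset.sum_insert (by simp), Finset.sum_insert (by simp), hT0, hTn]
  -- conclude
  rw [div_mul_eq_mul_div, le_div_iff₀ hnR]
  calc (A.card : ℝ) * n ≤ ∑ m ∈ Finset.range n, 2 ^ k * T m := step3
    _ = 2 ^ k * ∑ m ∈ Finset.range n, T m := by rw [Finset.mul_sum]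
    _ = 2 ^ k * ∑ m ∈ Finset.Icc 1 n, T m := by rw [hsum]
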